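/- For every real c ≥ 0, every R ∈ ℝ, and every integer N ≥ 1, one has | ∑_{k=N+1}^∞ cos(2πkR)/(c + 4π²k²) − (1/(4π²N)) · η_{N,R} | ≤ c / (48 π⁴ N³), where η_{N,R} = N ∑_{k=N+1}^∞ cos(2πkR)/k². (Lemma 3, eq. (bound_vN), with c playing the role of k_R².) -/

import Mathlib

/-!
Termwise, `cos θ / (c + 4π²k²) - cos θ / (4π²k²) = -c cos θ / ((c + 4π²k²) 4π²k²)`, whose absolute
value is at most `c / (16π⁴k⁴)`. The tail `∑_{k > N} 1/k⁴` is at most `1/(3N³)`, because each term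
is dominated by the telescoping difference `1/(3(k-1)³) - 1/(3k³)`.
-/

open Real Finset

theorem abs_div_add_sub_div_le {t a c : ℝ} (ht : |t| ≤ 1) (ha : 0 < a) (hc : 0 ≤ c) :
    |t / (c + a) - t / a| ≤ c / a ^ 2 := by
  have hca : 0 < c + a := by positivity
  rw [div_sub_div _ _ hca.ne' ha.ne', show t * a - (c + a) * t = -(t * c) by ring, neg_div,
    abs_neg, abs_div, abs_mul, abs_of_nonneg hc, abs_of_pos (mul_pos hca ha),
    div_le_div_iff₀ (by positivity) (by positivity)]
  calc |t| * c * a ^ 2 ≤ 1 * c * a ^ 2 := by gcongr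
    _ ≤ c * ((c + a) * a) := by rw [one_mul, sq]; gcongr; linarith

theorem norm_tsum_sub_tsum_le {ι E : Type*} [NormedAddCommGroup E] [CompleteSpace E]
    {f g : ι → E} {b : ι → ℝ} (hg : Summable g) (hb : Summable b)
    (h : ∀ i, ‖f i - g i‖ ≤ b i) : ‖∑' i, f i - ∑' i, g i‖ ≤ ∑' i, b i := by
  have hf : Summable f := by simpa using (hb.of_norm_bounded h).add hg
  rw [← hf.tsum_sub hg]
  exact tsum_of_norm_bounded hb.hasSum h

theorem summable_one_div_add_one_add_nat_pow {x : ℝ} (hx : 0 ≤ x) {p : ℕ} (hp : 1 < p) :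
    Summable fun k : ℕ => 1 / (x + 1 + k) ^ p := by
  refine ((Real.summable_one_div_nat_add_rpow (x + 1) p).mpr (by exact_mod_cast hp)).congr
    fun k => ?_
  rw [abs_of_pos (by positivity), Real.rpow_natCast, add_comm (k : ℝ)]

theorem one_div_add_one_pow_four_le {a : ℝ} (ha : 0 < a) :
    1 / (a + 1) ^ 4 ≤ 1 / (3 * a ^ 3) - 1 / (3 * (a + 1) ^ 3) := by
  rw [div_sub_div _ _ (by positivity) (by positivity), div_le_div_iff₀ (by positivity) (by positivity)]
  have hgap : 0 ≤ 3 * (a + 1) ^ 3 * (6 * a ^ 2 + 4 * a + 1) := by positivity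
  linear_combination hgap

theorem tsum_one_div_add_one_add_nat_pow_four_le {x : ℝ} (hx : 0 < x) :
    ∑' k : ℕ, 1 / (x + 1 + k) ^ 4 ≤ 1 / (3 * x ^ 3) := by
  let g : ℕ → ℝ := fun k => 1 / (3 * (x + k) ^ 3)
  refine Real.tsum_le_of_sum_range_le (fun k => by positivity) fun n => ?_
  calc ∑ k ∈ range n, 1 / (x + 1 + k) ^ 4 ≤ ∑ k ∈ range n, (g k - g (k + 1)) := by
        gcongr with k
        simp only [g, Nat.cast_succ]
        rw [add_right_comm x 1, ← add_assoc]
        exact one_div_add_one_pow_four_le (by positivity)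
    _ = g 0 - g n := sum_range_sub' g n
    _ ≤ 1 / (3 * x ^ 3) := by
        simp only [g, CharP.cast_eq_zero, add_zero, sub_le_self_iff]; positivity


/-- For every `c ≥ 0`, every `R ∈ ℝ`, and every integer `N ≥ 1`,
`|∑_{k=N+1}^∞ cos(2πkR)/(c + 4π²k²) − η_{N,R}/(4π²N)| ≤ c/(48π⁴N³)`,
where `η_{N,R} = N ∑_{k=N+1}^∞ cos(2πkR)/k²`. (Lemma 3, eq. (bound_vN).) -/
theorem tail_sum_cos_shifted_quadratic (c : ℝ) (hc : 0 ≤ c) (R : ℝ) (N : ℕ) (hN : 1 ≤ N) :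
    |(∑' k : ℕ, Real.cos (2 * π * ((N : ℝ) + 1 + (k : ℝ)) * R) /
          (c + 4 * π ^ 2 * ((N : ℝ) + 1 + (k : ℝ)) ^ 2)) -
        (1 / (4 * π ^ 2 * (N : ℝ))) *
          ((N : ℝ) * ∑' k : ℕ,
            Real.cos (2 * π * ((N : ℝ) + 1 + (k : ℝ)) * R) / ((N : ℝ) + 1 + (k : ℝ)) ^ 2)| ≤
      c / (48 * π ^ 4 * (N : ℝ) ^ 3) := by
  have hNpos : (0 : ℝ) < N := by exact_mod_cast hN
  have hη : 1 / (4 * π ^ 2 * N) *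
      (N * ∑' k : ℕ, cos (2 * π * (N + 1 + k) * R) / ((N : ℝ) + 1 + k) ^ 2) =
      ∑' k : ℕ, cos (2 * π * (N + 1 + k) * R) / (4 * π ^ 2 * ((N : ℝ) + 1 + k) ^ 2) := by
    rw [← mul_assoc, ← tsum_mul_left]
    congr 1 with k
    field_simp
  have hsummable : Summable fun k : ℕ =>
      cos (2 * π * (N + 1 + k) * R) / (4 * π ^ 2 * ((N : ℝ) + 1 + k) ^ 2) := by
    refine ((summable_one_div_add_one_add_nat_pow hNpos.le one_lt_two).mul_left
      (1 / (4 * π ^ 2))).of_norm_bounded fun k => ?_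
    rw [norm_div, norm_of_nonneg (by positivity : (0 : ℝ) ≤ 4 * π ^ 2 * ((N : ℝ) + 1 + k) ^ 2),
      one_div_mul_one_div]
    gcongr
    exact abs_cos_le_one _
  have hterm : ∀ k : ℕ,
      ‖cos (2 * π * (N + 1 + k) * R) / (c + 4 * π ^ 2 * ((N : ℝ) + 1 + k) ^ 2) -
        cos (2 * π * (N + 1 + k) * R) / (4 * π ^ 2 * ((N : ℝ) + 1 + k) ^ 2)‖ ≤
      c / (16 * π ^ 4) * (1 / ((N : ℝ) + 1 + k) ^ 4) := fun k =>
    (abs_div_add_sub_div_le (abs_cos_le_one _) (by positivity) hc).trans_eq (by field_simp; ring)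
  rw [hη]
  calc _ ≤ ∑' k : ℕ, c / (16 * π ^ 4) * (1 / ((N : ℝ) + 1 + k) ^ 4) :=
        norm_tsum_sub_tsum_le hsummable
          ((summable_one_div_add_one_add_nat_pow hNpos.le (by norm_num)).mul_left _) hterm
    _ = c / (16 * π ^ 4) * ∑' k : ℕ, 1 / ((N : ℝ) + 1 + k) ^ 4 := tsum_mul_left
    _ ≤ c / (16 * π ^ 4) * (1 / (3 * (N : ℝ) ^ 3)) := by
        gcongr; exact tsum_one_div_add_one_add_nat_pow_four_le hNpos
    _ = c / (48 * π ^ 4 * (N : ℝ) ^ 3) := by field_simp; ring
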